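/- Under λI ⪯ G ⪯ ΛI, the block BFGS update satisfies ‖H⁺‖₂ ≤ (1+√κ)²‖H‖₂ + 1/λ, where κ = Λ/λ, H⁺ = DΔDᵀ + (I − DΔYᵀ)H(I − YΔDᵀ), Y = GD, Δ = (DᵀGD)⁻¹. -/

import Mathlib

open Matrix

/-- The spectral (operator 2-) norm of a square real matrix. -/
noncomputable def specNorm {d : ℕ} (A : Matrix (Fin d) (Fin d) ℝ) : ℝ :=
  ‖Matrix.toEuclideanCLM (𝕜 := ℝ) A‖

/-!
With `P = DΔDᵀ` we have `PGP = P`, so `PG` is the `G`-orthogonal projection onto the range of `D`.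
Hence `I - PG` does not increase `⟪G x, x⟫`, and comparing this quadratic form with `‖x‖²` via
`λI ⪯ G ⪯ ΛI` gives `‖I - PG‖ ≤ √κ`; its adjoint `I - GP` has the same norm. Likewise
`λ‖Px‖² ≤ ⟪GPx, Px⟫ = ⟪Px, x⟫ ≤ ‖Px‖‖x‖` gives `‖P‖ ≤ 1/λ`. Together
`‖H⁺‖ ≤ 1/λ + κ‖H‖ ≤ (1+√κ)²‖H‖ + 1/λ`.
-/

open scoped InnerProductSpace ComplexOrder

namespace ContinuousLinearMap

variable {E : Type*} [NormedAddCommGroup E] [InnerProductSpace ℝ E] {G P : E →L[ℝ] E}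

lemma mul_norm_sq_le_inner_of_smul_one_le {c : ℝ} (h : c • 1 ≤ G) (x : E) :
    c * ‖x‖ ^ 2 ≤ ⟪G x, x⟫_ℝ := by
  have := ((le_def _ _).mp h).inner_nonneg_left x
  rw [_root_.sub_apply, inner_sub_left, _root_.smul_apply, one_apply_eq_self,
    real_inner_smul_left, real_inner_self_eq_norm_sq] at this
  linarith

lemma inner_le_mul_norm_sq_of_le_smul_one {c : ℝ} (h : G ≤ c • 1) (x : E) :
    ⟪G x, x⟫_ℝ ≤ c * ‖x‖ ^ 2 := by
  have := ((le_def _ _).mp h).inner_nonneg_left x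
  rw [_root_.sub_apply, inner_sub_left, _root_.smul_apply, one_apply_eq_self,
    real_inner_smul_left, real_inner_self_eq_norm_sq] at this
  linarith

lemma isPositive_of_smul_one_le {c : ℝ} (hc : 0 ≤ c) (h : c • 1 ≤ G) : G.IsPositive :=
  (nonneg_iff_isPositive G).mp
    (((nonneg_iff_isPositive _).mpr (isPositive_one.smul_of_nonneg hc)).trans h)

lemma norm_le_inv_of_mul_mul_self_eq {lam : ℝ} (hlam : 0 < lam) (hG : lam • 1 ≤ G)
    (hP : P.IsSymmetric) (hPGP : P * G * P = P) : ‖P‖ ≤ lam⁻¹ := by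
  refine opNorm_le_bound _ (inv_nonneg.mpr hlam.le) fun x => ?_
  have key : lam * ‖P x‖ ^ 2 ≤ ‖P x‖ * ‖x‖ :=
    calc lam * ‖P x‖ ^ 2 ≤ ⟪G (P x), P x⟫_ℝ := mul_norm_sq_le_inner_of_smul_one_le hG _
      _ = ⟪(P * G * P) x, x⟫_ℝ := (hP _ _).symm
      _ = ⟪P x, x⟫_ℝ := by rw [hPGP]
      _ ≤ ‖P x‖ * ‖x‖ := real_inner_le_norm _ _
  rw [inv_mul_eq_div, le_div_iff₀' hlam]
  rcases (norm_nonneg (P x)).eq_or_lt with h | h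
  · rw [← h]; simp
  · nlinarith

lemma inner_one_sub_mul_le (hG : G.IsPositive) (hP : P.IsSymmetric) (hPGP : P * G * P = P)
    (x : E) : ⟪G ((1 - P * G) x), (1 - P * G) x⟫_ℝ ≤ ⟪G x, x⟫_ℝ := by
  -- with `y = G x` the left side expands to `⟪G x, x⟫ - ⟪P y, y⟫`, and `⟪P y, y⟫ = ⟪G (P y), P y⟫`
  set y := G x
  have hPy : ⟪G (P y), P y⟫_ℝ = ⟪P y, y⟫_ℝ :=
    calc ⟪G (P y), P y⟫_ℝ = ⟪(P * G * P) y, y⟫_ℝ := (hP _ _).symm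
      _ = ⟪P y, y⟫_ℝ := by rw [hPGP]
  have hGsymm : ⟪G (P y), x⟫_ℝ = ⟪P y, y⟫_ℝ := hG.isSymmetric _ _
  have hPsymm : ⟪y, P y⟫_ℝ = ⟪P y, y⟫_ℝ := real_inner_comm _ _
  have := hG.inner_nonneg_left (P y)
  simp only [_root_.sub_apply, one_apply_eq_self, mul_apply_eq_comp, map_sub, inner_sub_left,
    inner_sub_right]
  linarith

lemma norm_one_sub_mul_le {lam Lam : ℝ} (hlam : 0 < lam) (hlo : lam • 1 ≤ G) (hhi : G ≤ Lam • 1)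
    (hP : P.IsSymmetric) (hPGP : P * G * P = P) : ‖1 - P * G‖ ≤ √(Lam / lam) := by
  refine opNorm_le_bound _ (Real.sqrt_nonneg _) fun x => ?_
  set z := (1 - P * G) x
  have hsq : ‖z‖ ^ 2 ≤ Lam / lam * ‖x‖ ^ 2 := by
    rw [div_mul_eq_mul_div, le_div_iff₀' hlam]
    calc lam * ‖z‖ ^ 2 ≤ ⟪G z, z⟫_ℝ := mul_norm_sq_le_inner_of_smul_one_le hlo z
      _ ≤ ⟪G x, x⟫_ℝ :=
        inner_one_sub_mul_le (isPositive_of_smul_one_le hlam.le hlo) hP hPGP x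
      _ ≤ Lam * ‖x‖ ^ 2 := inner_le_mul_norm_sq_of_le_smul_one hhi x
  calc ‖z‖ = √(‖z‖ ^ 2) := (Real.sqrt_sq (norm_nonneg z)).symm
    _ ≤ √(Lam / lam * ‖x‖ ^ 2) := Real.sqrt_le_sqrt hsq
    _ = √(Lam / lam) * ‖x‖ := by rw [Real.sqrt_mul' _ (by positivity), Real.sqrt_sq (norm_nonneg x)]

variable [CompleteSpace E]

lemma norm_one_sub_mul_comm (hG : IsSelfAdjoint G) (hP : IsSelfAdjoint P) :
    ‖1 - G * P‖ = ‖1 - P * G‖ := by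
  rw [← norm_star (1 - P * G), star_sub, star_one, star_mul, hP.star_eq, hG.star_eq]

theorem norm_add_one_sub_mul_mul_one_sub_mul_le {lam Lam : ℝ} (hlam : 0 < lam)
    (hlo : lam • 1 ≤ G) (hhi : G ≤ Lam • 1) (hP : IsSelfAdjoint P) (hPGP : P * G * P = P)
    (H : E →L[ℝ] E) :
    ‖P + (1 - P * G) * H * (1 - G * P)‖ ≤ (1 + √(Lam / lam)) ^ 2 * ‖H‖ + lam⁻¹ := by
  have hG := (isPositive_of_smul_one_le hlam.le hlo).isSelfAdjoint
  have hPG := norm_one_sub_mul_le hlam hlo hhi hP.isSymmetric hPGP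
  have hGP : ‖1 - G * P‖ ≤ √(Lam / lam) := norm_one_sub_mul_comm hG hP ▸ hPG
  calc ‖P + (1 - P * G) * H * (1 - G * P)‖
      ≤ ‖P‖ + ‖1 - P * G‖ * ‖H‖ * ‖1 - G * P‖ :=
        (norm_add_le _ _).trans (add_le_add_right norm_mul₃_le _)
    _ ≤ lam⁻¹ + √(Lam / lam) * ‖H‖ * √(Lam / lam) := by
        gcongr
        exact norm_le_inv_of_mul_mul_self_eq hlam hlo hP.isSymmetric hPGP
    _ ≤ (1 + √(Lam / lam)) ^ 2 * ‖H‖ + lam⁻¹ := by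
        nlinarith [Real.sqrt_nonneg (Lam / lam), norm_nonneg H]

end ContinuousLinearMap

namespace Matrix

lemma mulVec_injective_of_rank_eq_card {m n K : Type*} [Fintype n] [Field K] {A : Matrix m n K}
    (h : A.rank = Fintype.card n) : Function.Injective A.mulVec := by
  rw [mulVec_injective_iff, linearIndependent_iff_card_eq_finrank_span, ← h,
    rank_eq_finrank_span_cols]
  rfl

lemma toEuclideanCLM_le_toEuclideanCLM_iff {n 𝕜 : Type*} [Fintype n] [DecidableEq n] [RCLike 𝕜]
    {A B : Matrix n n 𝕜} :
    toEuclideanCLM (n := n) (𝕜 := 𝕜) A ≤ toEuclideanCLM (n := n) (𝕜 := 𝕜) B ↔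
      (B - A).PosSemidef := by
  rw [ContinuousLinearMap.le_def, ← map_sub, ← ContinuousLinearMap.isPositive_toLinearMap_iff,
    coe_toEuclideanCLM_eq_toEuclideanLin, isPositive_toEuclideanLin_iff]

variable {m n R : Type*} [Fintype m] [DecidableEq m] [Fintype n] [CommRing R]
  {G : Matrix n n R} (D : Matrix n m R)

lemma IsSymm.mul_inv_mul_transpose (hG : G.IsSymm) : (D * (Dᵀ * G * D)⁻¹ * Dᵀ).IsSymm := by
  have hM : (Dᵀ * G * D).IsSymm := by
    simp only [IsSymm, transpose_mul, transpose_transpose, hG.eq, Matrix.mul_assoc]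
  rw [IsSymm, transpose_mul, transpose_mul, transpose_transpose, transpose_nonsing_inv, hM.eq]
  simp only [Matrix.mul_assoc]

lemma mul_inv_mul_transpose_mul_mul_self (hM : IsUnit (Dᵀ * G * D).det) :
    D * (Dᵀ * G * D)⁻¹ * Dᵀ * G * (D * (Dᵀ * G * D)⁻¹ * Dᵀ) = D * (Dᵀ * G * D)⁻¹ * Dᵀ := by
  calc D * (Dᵀ * G * D)⁻¹ * Dᵀ * G * (D * (Dᵀ * G * D)⁻¹ * Dᵀ)
      = D * ((Dᵀ * G * D)⁻¹ * (Dᵀ * G * D)) * (Dᵀ * G * D)⁻¹ * Dᵀ := by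
        simp only [Matrix.mul_assoc]
    _ = D * (Dᵀ * G * D)⁻¹ * Dᵀ := by rw [nonsing_inv_mul _ hM, Matrix.mul_one]

end Matrix

theorem block_bfgs_norm_bound_general {d q : ℕ} (lam Lam : ℝ) (hlam : 0 < lam)
    (H : Matrix (Fin d) (Fin d) ℝ)
    (G : Matrix (Fin d) (Fin d) ℝ) (hGsym : G.IsSymm)
    (hlo : (G - lam • (1 : Matrix (Fin d) (Fin d) ℝ)).PosSemidef)
    (hhi : ((Lam • (1 : Matrix (Fin d) (Fin d) ℝ)) - G).PosSemidef)
    (D : Matrix (Fin d) (Fin q) ℝ) (hD : D.rank = q) :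
    let Y := G * D
    let Δ := (Dᵀ * G * D)⁻¹
    specNorm (D * Δ * Dᵀ + (1 - D * Δ * Yᵀ) * H * (1 - Y * Δ * Dᵀ)) ≤
      (1 + Real.sqrt (Lam / lam)) ^ 2 * specNorm H + 1 / lam := by
  intro Y Δ
  have hGpd : G.PosDef := by simpa using PosDef.posSemidef_add hlo (PosDef.one.smul hlam)
  have hM : (Dᵀ * G * D).PosDef := by
    simpa using hGpd.conjTranspose_mul_mul_same
      (D.mulVec_injective_of_rank_eq_card (by simpa using hD))
  have hupdate : D * Δ * Yᵀ = D * Δ * Dᵀ * G ∧ Y * Δ * Dᵀ = G * (D * Δ * Dᵀ) := by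
    simp only [Y, transpose_mul, hGsym.eq, Matrix.mul_assoc, and_self]
  have hP : IsSelfAdjoint (toEuclideanCLM (𝕜 := ℝ) (D * Δ * Dᵀ)) :=
    (isHermitian_iff_isSymm.mpr (hGsym.mul_inv_mul_transpose D)).isSelfAdjoint.map _
  have hPGP := mul_inv_mul_transpose_mul_mul_self D ((isUnit_iff_isUnit_det _).mp hM.isUnit)
  have hlo' : lam • 1 ≤ toEuclideanCLM (𝕜 := ℝ) G := by
    simpa only [map_smul, map_one] using toEuclideanCLM_le_toEuclideanCLM_iff.mpr hlo
  have hhi' : toEuclideanCLM (𝕜 := ℝ) G ≤ Lam • 1 := by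
    simpa only [map_smul, map_one] using toEuclideanCLM_le_toEuclideanCLM_iff.mpr hhi
  rw [hupdate.1, hupdate.2, specNorm, specNorm, one_div]
  simp only [map_add, map_mul, map_sub, map_one]
  refine ContinuousLinearMap.norm_add_one_sub_mul_mul_one_sub_mul_le hlam hlo' hhi' hP ?_ _
  rw [← map_mul, ← map_mul, hPGP]

/-- Under `λI ⪯ G ⪯ ΛI`, the block BFGS update satisfies
`‖H⁺‖₂ ≤ (1+√κ)²‖H‖₂ + 1/λ` with `κ = Λ/λ`, where
`H⁺ = DΔDᵀ + (I − DΔYᵀ)H(I − YΔDᵀ)`, `Y = GD`, `Δ = (DᵀGD)⁻¹`. -/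
theorem block_bfgs_norm_bound {d q : ℕ} (lam Lam : ℝ) (hlam : 0 < lam) (hll : lam ≤ Lam)
    (H : Matrix (Fin d) (Fin d) ℝ) (hH : H.PosDef)
    (G : Matrix (Fin d) (Fin d) ℝ) (hGsym : G.IsSymm)
    (hlo : (G - lam • (1 : Matrix (Fin d) (Fin d) ℝ)).PosSemidef)
    (hhi : ((Lam • (1 : Matrix (Fin d) (Fin d) ℝ)) - G).PosSemidef)
    (D : Matrix (Fin d) (Fin q) ℝ) (hD : D.rank = q) :
    let Y := G * D
    let Δ := (Dᵀ * G * D)⁻¹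
    specNorm (D * Δ * Dᵀ + (1 - D * Δ * Yᵀ) * H * (1 - Y * Δ * Dᵀ)) ≤
      (1 + Real.sqrt (Lam / lam)) ^ 2 * specNorm H + 1 / lam :=
  block_bfgs_norm_bound_general lam Lam hlam H G hGsym hlo hhi D hD
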